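/- arXiv:2303.00876 — 2 statements merged into one kernel-verified Lean document; each statement's English description precedes it below -/
import Mathlib

section
/- For every d ∈ ℓ^∞, the weighted forward shift F_d : ℓ^∞ → ℓ^∞ defined by F_d(a) = (0, d_1 a_1, d_2 a_2, ...) and the weighted backward shift B_d(a) = (d_1 a_2, d_2 a_3, ...) both have operator norm ‖d‖_∞ with respect to the norm ‖a‖_w := w(T_a) on ℓ^∞. -/
open Filter Finset Topology

/-- The numerical range of the weighted forward shift `T_a` on `ℓ²`:
values `⟨T_a x, x⟩ = ∑ a_k x_k conj (x_{k+1})` over unit vectors `x ∈ ℓ²`. -/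
noncomputable def numRange (a : ℕ → ℂ) : Set ℂ :=
  {z | ∃ x : ℕ → ℂ, (∑' k, ‖x k‖ ^ 2) = (1 : ℝ) ∧
    z = ∑' k, a k * x k * (starRingEnd ℂ) (x (k + 1))}

/-- The numerical radius `w(T_a)` of the weighted forward shift. -/
noncomputable def numRad (a : ℕ → ℂ) : ℝ := sSup ((fun z : ℂ => ‖z‖) '' numRange a)

/-- `a ∈ ℓ^∞`. -/
def IsBddSeq (a : ℕ → ℂ) : Prop := ∃ C : ℝ, ∀ k, ‖a k‖ ≤ C

/-- The uniform norm `‖a‖_∞`. -/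
noncomputable def supNorm (a : ℕ → ℂ) : ℝ := ⨆ k, ‖a k‖

/-- `sup_{j ∈ ℕ} (1/n) ∑_{k=1}^n |a_{k+j-1}|` (0-based indexing). -/
noncomputable def avgSup (a : ℕ → ℂ) (n : ℕ) : ℝ :=
  ⨆ j : ℕ, (∑ k ∈ Finset.range n, ‖a (k + j)‖) / n

/-- `sup_{j ∈ ℕ} (∏_{k=1}^n |a_{k+j-1}|)^{1/n}` (0-based indexing). -/
noncomputable def prodSup (a : ℕ → ℂ) (n : ℕ) : ℝ :=
  ⨆ j : ℕ, (∏ k ∈ Finset.range n, ‖a (k + j)‖) ^ ((1 : ℝ) / n)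

/-- The weighted forward shift `F_d` on `ℓ^∞`. -/
def fwdShiftSeq (d a : ℕ → ℂ) : ℕ → ℂ
  | 0 => 0
  | (k + 1) => d k * a k


-- basic summability from tsum = 1
lemma summable_of_tsum_one {x : ℕ → ℂ} (h : (∑' k, ‖x k‖ ^ 2) = (1 : ℝ)) :
    Summable fun k => ‖x k‖ ^ 2 := by
  by_contra hs
  rw [tsum_eq_zero_of_not_summable hs] at h; norm_num at h

lemma term_norm (b x : ℕ → ℂ) (k : ℕ) :
    ‖b k * x k * (starRingEnd ℂ) (x (k + 1))‖ = ‖b k‖ * ‖x k‖ * ‖x (k + 1)‖ := by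
  simp [norm_mul]

lemma term_bound {b : ℕ → ℂ} {C : ℝ} (hb : ∀ k, ‖b k‖ ≤ C) (x : ℕ → ℂ) (k : ℕ) :
    ‖b k * x k * (starRingEnd ℂ) (x (k + 1))‖ ≤ C / 2 * (‖x k‖ ^ 2 + ‖x (k + 1)‖ ^ 2) := by
  have h0 : (0:ℝ) ≤ ‖b k‖ := norm_nonneg _
  have h1 := hb k
  have h2 : (0:ℝ) ≤ ‖x k‖ := norm_nonneg _
  have h3 : (0:ℝ) ≤ ‖x (k+1)‖ := norm_nonneg _
  rw [term_norm]
  nlinarith [sq_nonneg (‖x k‖ - ‖x (k+1)‖), mul_nonneg h2 h3]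

lemma shift_sq_summable {x : ℕ → ℂ} (hx : Summable fun k => ‖x k‖ ^ 2) :
    Summable fun k => ‖x (k + 1)‖ ^ 2 :=
  (summable_nat_add_iff (f := fun k => ‖x k‖ ^ 2) 1).2 hx

lemma summable_term {b : ℕ → ℂ} {C : ℝ} (hb : ∀ k, ‖b k‖ ≤ C) {x : ℕ → ℂ}
    (hx : Summable fun k => ‖x k‖ ^ 2) :
    Summable fun k => ‖b k * x k * (starRingEnd ℂ) (x (k + 1))‖ := by
  have hx' := shift_sq_summable hx
  have : Summable fun k => C / 2 * (‖x k‖ ^ 2 + ‖x (k + 1)‖ ^ 2) := ((hx.add hx').mul_left _)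
  exact this.of_nonneg_of_le (fun k => norm_nonneg _) (term_bound hb x)

lemma summable_term' {b : ℕ → ℂ} {C : ℝ} (hb : ∀ k, ‖b k‖ ≤ C) {x : ℕ → ℂ}
    (hx : Summable fun k => ‖x k‖ ^ 2) :
    Summable fun k => b k * x k * (starRingEnd ℂ) (x (k + 1)) :=
  (summable_term hb hx).of_norm

lemma zero_mem_numRange (a : ℕ → ℂ) : (0:ℂ) ∈ numRange a := by
  refine ⟨fun k => if k = 0 then 1 else 0, ?_, ?_⟩
  · rw [tsum_eq_single 0 (fun k hk => by simp [hk])]; simp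
  · rw [eq_comm, tsum_eq_single 0 (fun k hk => by simp [hk])]
    simp

lemma numRange_nonempty (a : ℕ → ℂ) : ((fun z : ℂ => ‖z‖) '' numRange a).Nonempty :=
  ⟨0, ⟨0, zero_mem_numRange a, norm_zero⟩⟩

lemma norm_mem_numRange_le {a : ℕ → ℂ} {C : ℝ} (ha : ∀ k, ‖a k‖ ≤ C) {z : ℂ}
    (hz : z ∈ numRange a) : ‖z‖ ≤ C := by
  obtain ⟨x, hx1, rfl⟩ := hz
  have hs := summable_of_tsum_one hx1
  have hs' := shift_sq_summable hs
  have h1 : ‖∑' k, a k * x k * (starRingEnd ℂ) (x (k + 1))‖ ≤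
      ∑' k, ‖a k * x k * (starRingEnd ℂ) (x (k + 1))‖ :=
    norm_tsum_le_tsum_norm (summable_term ha hs)
  have h2 : (∑' k, ‖a k * x k * (starRingEnd ℂ) (x (k + 1))‖) ≤
      ∑' k, C / 2 * (‖x k‖ ^ 2 + ‖x (k + 1)‖ ^ 2) :=
    Summable.tsum_le_tsum (term_bound ha x) (summable_term ha hs) ((hs.add hs').mul_left _)
  have hC : (0:ℝ) ≤ C := le_trans (norm_nonneg _) (ha 0)
  have h3 : (∑' k, C / 2 * (‖x k‖ ^ 2 + ‖x (k + 1)‖ ^ 2)) =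
      C / 2 * ((∑' k, ‖x k‖ ^ 2) + ∑' k, ‖x (k + 1)‖ ^ 2) := by
    rw [tsum_mul_left, Summable.tsum_add hs hs']
  have h4 : (∑' k, ‖x (k + 1)‖ ^ 2) ≤ 1 := by
    have := (Summable.tsum_eq_zero_add hs)
    rw [hx1] at this
    nlinarith [sq_nonneg ‖x 0‖]
  calc ‖∑' k, a k * x k * (starRingEnd ℂ) (x (k + 1))‖ ≤ _ := h1
    _ ≤ _ := h2
    _ = _ := h3
    _ ≤ C / 2 * (1 + 1) := by nlinarith
    _ = C := by ring

lemma bddAbove_numRange {a : ℕ → ℂ} {C : ℝ} (ha : ∀ k, ‖a k‖ ≤ C) :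
    BddAbove ((fun z : ℂ => ‖z‖) '' numRange a) := by
  refine ⟨C, ?_⟩
  rintro r ⟨z, hz, rfl⟩
  exact norm_mem_numRange_le ha hz

lemma numRad_nonneg {a : ℕ → ℂ} {C : ℝ} (ha : ∀ k, ‖a k‖ ≤ C) : 0 ≤ numRad a := by
  have := le_csSup (bddAbove_numRange ha) ⟨0, zero_mem_numRange a, norm_zero⟩
  simpa [numRad] using this

noncomputable def phase (a : ℕ → ℂ) : ℕ → ℂ
  | 0 => 1
  | (k + 1) => phase a k * (if a k = 0 then 1 else a k / ‖a k‖)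

lemma phase_norm (a : ℕ → ℂ) : ∀ k, ‖phase a k‖ = 1 := by
  intro k
  induction k with
  | zero => simp [phase]
  | succ k ih =>
    by_cases h : a k = 0
    · simp [phase, h, norm_mul, ih]
    · have : ‖a k / (‖a k‖ : ℂ)‖ = 1 := by
        rw [norm_div, Complex.norm_real, norm_norm]
        exact div_self (norm_ne_zero_iff.2 h)
      simp only [phase, if_neg h, norm_mul, ih, this, one_mul]

lemma phase_spec (a : ℕ → ℂ) (k : ℕ) :
    a k * phase a k * (starRingEnd ℂ) (phase a (k + 1)) = (‖a k‖ : ℂ) := by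
  have hn : ‖phase a k‖ = 1 := phase_norm a k
  have hsq : phase a k * (starRingEnd ℂ) (phase a k) = 1 := by
    rw [Complex.mul_conj]
    norm_cast
    simp [Complex.normSq_eq_norm_sq, hn]
  by_cases h : a k = 0
  · simp [phase, h]
  · simp only [phase, if_neg h, map_mul]
    have : a k * phase a k * ((starRingEnd ℂ) (phase a k) * (starRingEnd ℂ) (a k / ‖a k‖))
        = a k * (starRingEnd ℂ) (a k / ‖a k‖) * (phase a k * (starRingEnd ℂ) (phase a k)) := by
      ring
    rw [this, hsq, mul_one, map_div₀]
    rw [Complex.conj_ofReal]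
    rw [div_eq_mul_inv, ← mul_assoc, Complex.mul_conj]
    have hne : ((‖a k‖ : ℂ)) ≠ 0 := by
      simpa using (norm_ne_zero_iff.2 h)
    rw [Complex.normSq_eq_norm_sq]
    rw [sq]
    field_simp
    norm_cast

lemma summable_norm_prod {a : ℕ → ℂ} {C : ℝ} (ha : ∀ k, ‖a k‖ ≤ C) {x : ℕ → ℂ}
    (hx : Summable fun k => ‖x k‖ ^ 2) :
    Summable fun k => ‖a k‖ * ‖x k‖ * ‖x (k + 1)‖ :=
  (summable_term ha hx).congr (fun k => term_norm a x k)

lemma key_le {a : ℕ → ℂ} {C : ℝ} (ha : ∀ k, ‖a k‖ ≤ C) {x : ℕ → ℂ}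
    (hx : Summable fun k => ‖x k‖ ^ 2) (hx1 : (∑' k, ‖x k‖ ^ 2) ≤ 1) :
    (∑' k, ‖a k‖ * ‖x k‖ * ‖x (k + 1)‖) ≤ numRad a := by
  set s : ℝ := ∑' k, ‖x k‖ ^ 2 with hs_def
  have hs0 : 0 ≤ s := tsum_nonneg (fun k => sq_nonneg _)
  rcases eq_or_lt_of_le hs0 with hs | hs
  · -- s = 0 : all x k = 0
    have hxz : ∀ k, x k = 0 := by
      intro k
      have := Summable.le_tsum hx k (fun i _ => sq_nonneg ‖x i‖)
      rw [← hs_def, ← hs] at this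
      have : ‖x k‖ ^ 2 = 0 := le_antisymm this (sq_nonneg _)
      simpa [pow_eq_zero_iff] using this
    have : (∑' k, ‖a k‖ * ‖x k‖ * ‖x (k + 1)‖) = 0 := by
      simp [hxz]
    rw [this]
    exact numRad_nonneg ha
  · -- s > 0
    set r : ℝ := ∑' k, ‖a k‖ * ‖x k‖ * ‖x (k + 1)‖ with hr_def
    have hr0 : 0 ≤ r := tsum_nonneg fun k =>
      mul_nonneg (mul_nonneg (norm_nonneg _) (norm_nonneg _)) (norm_nonneg _)
    have hsq : Real.sqrt s * Real.sqrt s = s := Real.mul_self_sqrt hs0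
    have hsqpos : 0 < Real.sqrt s := Real.sqrt_pos.2 hs
    set y : ℕ → ℂ := fun k => ((‖x k‖ / Real.sqrt s : ℝ) : ℂ) * phase a k with hy_def
    have hynorm : ∀ k, ‖y k‖ = ‖x k‖ / Real.sqrt s := by
      intro k
      rw [hy_def]
      simp only [norm_mul, Complex.norm_real, Real.norm_eq_abs, phase_norm, mul_one]
      exact abs_of_nonneg (div_nonneg (norm_nonneg _) hsqpos.le)
    have hy1 : (∑' k, ‖y k‖ ^ 2) = 1 := by
      have : ∀ k, ‖y k‖ ^ 2 = ‖x k‖ ^ 2 / s := by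
        intro k
        rw [hynorm k, div_pow, sq (Real.sqrt s), hsq]
      rw [tsum_congr this, tsum_div_const, ← hs_def, div_self (ne_of_gt hs)]
    have hterm : ∀ k, a k * y k * (starRingEnd ℂ) (y (k + 1)) =
        ((‖a k‖ * ‖x k‖ * ‖x (k + 1)‖ / s : ℝ) : ℂ) := by
      intro k
      rw [hy_def]
      simp only [map_mul, Complex.conj_ofReal]
      have : a k * (((‖x k‖ / Real.sqrt s : ℝ) : ℂ) * phase a k) *
          (((‖x (k + 1)‖ / Real.sqrt s : ℝ) : ℂ) * (starRingEnd ℂ) (phase a (k + 1))) =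
          (a k * phase a k * (starRingEnd ℂ) (phase a (k + 1))) *
            (((‖x k‖ / Real.sqrt s : ℝ) : ℂ) * ((‖x (k + 1)‖ / Real.sqrt s : ℝ) : ℂ)) := by
        ring
      have hsqC : ((Real.sqrt s : ℝ) : ℂ) * ((Real.sqrt s : ℝ) : ℂ) = (s : ℂ) := by
        rw [← Complex.ofReal_mul, hsq]
      rw [this, phase_spec]
      push_cast
      rw [div_mul_div_comm]
      rw [show ((Real.sqrt s : ℝ) : ℂ) * ((Real.sqrt s : ℝ) : ℂ) = (s : ℂ) from hsqC]
      ring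
    have hz : (∑' k, a k * y k * (starRingEnd ℂ) (y (k + 1))) = ((r / s : ℝ) : ℂ) := by
      rw [tsum_congr hterm, ← Complex.ofReal_tsum, tsum_div_const, ← hr_def]
    have hmem : ((r / s : ℝ) : ℂ) ∈ numRange a := ⟨y, hy1, hz.symm⟩
    have hle : r / s ≤ numRad a := by
      have h := le_csSup (bddAbove_numRange ha) ⟨_, hmem, rfl⟩
      calc r / s = ‖((r / s : ℝ) : ℂ)‖ := by
            rw [Complex.norm_real, Real.norm_eq_abs, abs_of_nonneg (div_nonneg hr0 hs0)]
        _ ≤ numRad a := h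
    calc r = r * s / s := by field_simp
      _ ≤ r * 1 / s := by
        have h' : r * s ≤ r * 1 := mul_le_mul_of_nonneg_left hx1 hr0
        exact (div_le_div_iff_of_pos_right hs).2 h'
      _ = r / s := by ring
      _ ≤ numRad a := hle

lemma main_upper {b a : ℕ → ℂ} {M C : ℝ} (hM : 0 ≤ M) (hb : ∀ k, ‖b k‖ ≤ M * ‖a k‖)
    (ha : ∀ k, ‖a k‖ ≤ C) {x : ℕ → ℂ} (hx : Summable fun k => ‖x k‖ ^ 2)
    (hx1 : (∑' k, ‖x k‖ ^ 2) ≤ 1) :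
    ‖∑' k, b k * x k * (starRingEnd ℂ) (x (k + 1))‖ ≤ M * numRad a := by
  have hC : 0 ≤ C := le_trans (norm_nonneg _) (ha 0)
  have hbC : ∀ k, ‖b k‖ ≤ M * C := fun k =>
    le_trans (hb k) (mul_le_mul_of_nonneg_left (ha k) hM)
  have h1 : ‖∑' k, b k * x k * (starRingEnd ℂ) (x (k + 1))‖ ≤
      ∑' k, ‖b k * x k * (starRingEnd ℂ) (x (k + 1))‖ :=
    norm_tsum_le_tsum_norm (summable_term hbC hx)
  have h2 : (∑' k, ‖b k * x k * (starRingEnd ℂ) (x (k + 1))‖) ≤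
      ∑' k, M * (‖a k‖ * ‖x k‖ * ‖x (k + 1)‖) := by
    apply Summable.tsum_le_tsum ?_ (summable_term hbC hx) ((summable_norm_prod ha hx).mul_left M)
    intro k
    rw [term_norm]
    calc ‖b k‖ * ‖x k‖ * ‖x (k + 1)‖ ≤ (M * ‖a k‖) * ‖x k‖ * ‖x (k + 1)‖ := by
          apply mul_le_mul_of_nonneg_right (mul_le_mul_of_nonneg_right (hb k) (norm_nonneg _))
            (norm_nonneg _)
      _ = M * (‖a k‖ * ‖x k‖ * ‖x (k + 1)‖) := by ring
  have h3 : (∑' k, M * (‖a k‖ * ‖x k‖ * ‖x (k + 1)‖)) = M * ∑' k, ‖a k‖ * ‖x k‖ * ‖x (k + 1)‖ :=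
    tsum_mul_left
  calc ‖∑' k, b k * x k * (starRingEnd ℂ) (x (k + 1))‖ ≤ _ := h1
    _ ≤ _ := h2
    _ = _ := h3
    _ ≤ M * numRad a := mul_le_mul_of_nonneg_left (key_le ha hx hx1) hM

lemma supNorm_nonneg {d : ℕ → ℂ} (hd : IsBddSeq d) : 0 ≤ supNorm d := by
  obtain ⟨C, hC⟩ := hd
  have hbd : BddAbove (Set.range fun k => ‖d k‖) := ⟨C, by rintro r ⟨k, rfl⟩; exact hC k⟩
  exact le_trans (norm_nonneg (d 0)) (le_ciSup hbd 0)

lemma le_supNorm {d : ℕ → ℂ} (hd : IsBddSeq d) (k : ℕ) : ‖d k‖ ≤ supNorm d := by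
  obtain ⟨C, hC⟩ := hd
  exact le_ciSup (⟨C, by rintro r ⟨k, rfl⟩; exact hC k⟩ : BddAbove (Set.range fun k => ‖d k‖)) k

lemma shifted_sum_le_one {x : ℕ → ℂ} (hs : Summable fun k => ‖x k‖ ^ 2)
    (hx1 : (∑' k, ‖x k‖ ^ 2) = 1) : (∑' k, ‖x (k + 1)‖ ^ 2) ≤ 1 := by
  have := Summable.tsum_eq_zero_add hs
  rw [hx1] at this
  nlinarith [sq_nonneg ‖x 0‖]

lemma numRad_fwd_le {d a : ℕ → ℂ} (hd : IsBddSeq d) (ha : IsBddSeq a) :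
    numRad (fwdShiftSeq d a) ≤ supNorm d * numRad a := by
  obtain ⟨Ca, hCa⟩ := ha
  obtain ⟨Cd, hCd⟩ := hd
  have hCa0 : 0 ≤ Ca := le_trans (norm_nonneg _) (hCa 0)
  have hCd0 : 0 ≤ Cd := le_trans (norm_nonneg _) (hCd 0)
  have hM0 : 0 ≤ supNorm d := supNorm_nonneg ⟨Cd, hCd⟩
  have hF : ∀ k, ‖fwdShiftSeq d a k‖ ≤ Cd * Ca := by
    intro k
    cases k with
    | zero => simp [fwdShiftSeq]; positivity
    | succ k =>
      simp only [fwdShiftSeq, norm_mul]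
      exact mul_le_mul (hCd k) (hCa k) (norm_nonneg _) hCd0
  apply csSup_le (numRange_nonempty _)
  rintro r ⟨z, ⟨x, hx1, rfl⟩, rfl⟩
  have hs := summable_of_tsum_one hx1
  have hsum : Summable fun k => fwdShiftSeq d a k * x k * (starRingEnd ℂ) (x (k + 1)) :=
    summable_term' hF hs
  rw [Summable.tsum_eq_zero_add hsum]
  simp only [fwdShiftSeq, zero_mul, zero_add]
  have hx' : Summable fun k => ‖x (k + 1)‖ ^ 2 := shift_sq_summable hs
  have hx'1 : (∑' k, ‖x (k + 1)‖ ^ 2) ≤ 1 := shifted_sum_le_one hs hx1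
  have hble : ∀ k, ‖d k * a k‖ ≤ supNorm d * ‖a k‖ := by
    intro k
    rw [norm_mul]
    exact mul_le_mul_of_nonneg_right (le_supNorm ⟨Cd, hCd⟩ k) (norm_nonneg _)
  exact main_upper (a := a) (x := fun k => x (k + 1)) hM0 hble hCa hx' hx'1

lemma numRad_bwd_le {d a : ℕ → ℂ} (hd : IsBddSeq d) (ha : IsBddSeq a) :
    numRad (fun k => d k * a (k + 1)) ≤ supNorm d * numRad a := by
  obtain ⟨Ca, hCa⟩ := ha
  obtain ⟨Cd, hCd⟩ := hd
  have hCa0 : 0 ≤ Ca := le_trans (norm_nonneg _) (hCa 0)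
  have hCd0 : 0 ≤ Cd := le_trans (norm_nonneg _) (hCd 0)
  have hM0 : 0 ≤ supNorm d := supNorm_nonneg ⟨Cd, hCd⟩
  apply csSup_le (numRange_nonempty _)
  rintro r ⟨z, ⟨x, hx1, rfl⟩, rfl⟩
  have hs := summable_of_tsum_one hx1
  set y : ℕ → ℂ := fun n => Nat.casesOn n 0 (fun k => x k) with hy_def
  set b' : ℕ → ℂ := fwdShiftSeq d (fun j => a (j + 1)) with hb_def
  have hb'le : ∀ k, ‖b' k‖ ≤ supNorm d * ‖a k‖ := by
    intro k
    cases k with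
    | zero => simp [hb_def, fwdShiftSeq]; positivity
    | succ k =>
      simp only [hb_def, fwdShiftSeq, norm_mul]
      exact mul_le_mul_of_nonneg_right (le_supNorm ⟨Cd, hCd⟩ k) (norm_nonneg _)
  have hy : Summable fun k => ‖y k‖ ^ 2 := by
    apply (summable_nat_add_iff (f := fun k => ‖y k‖ ^ 2) 1).1
    exact hs.congr (fun k => rfl)
  have hy1 : (∑' k, ‖y k‖ ^ 2) = 1 := by
    rw [Summable.tsum_eq_zero_add hy]
    have h0 : y 0 = 0 := rfl
    have hc : (∑' b, ‖y (b + 1)‖ ^ 2) = ∑' b, ‖x b‖ ^ 2 := tsum_congr (fun b => rfl)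
    rw [h0, hc, hx1]
    simp
  have hb'C : ∀ k, ‖b' k‖ ≤ Cd * Ca := by
    intro k
    cases k with
    | zero => simp [hb_def, fwdShiftSeq]; positivity
    | succ k =>
      simp only [hb_def, fwdShiftSeq, norm_mul]
      exact mul_le_mul (hCd k) (hCa (k + 1)) (norm_nonneg _) hCd0
  have hsum : Summable fun k => b' k * y k * (starRingEnd ℂ) (y (k + 1)) :=
    summable_term' hb'C hy
  have hz : (∑' k, d k * a (k + 1) * x k * (starRingEnd ℂ) (x (k + 1))) =
      ∑' k, b' k * y k * (starRingEnd ℂ) (y (k + 1)) := by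
    rw [Summable.tsum_eq_zero_add hsum]
    simp only [hb_def, hy_def, fwdShiftSeq, mul_zero, zero_mul, zero_add]
  rw [hz]
  exact main_upper hM0 hb'le hCa hy (le_of_eq hy1)

lemma numRad_single (j : ℕ) (t : ℂ) :
    numRad (fun k => if k = j then t else 0) = ‖t‖ / 2 := by
  have hδ : ∀ k, ‖(fun k => if k = j then t else 0) k‖ ≤ ‖t‖ := by
    intro k; by_cases h : k = j <;> simp [h]
  have hne : j ≠ j + 1 := by omega
  apply le_antisymm
  · apply csSup_le (numRange_nonempty _)
    rintro r ⟨z, ⟨x, hx1, rfl⟩, rfl⟩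
    have hs := summable_of_tsum_one hx1
    have hz : (∑' k, (fun k => if k = j then t else 0) k * x k * (starRingEnd ℂ) (x (k + 1)))
        = t * x j * (starRingEnd ℂ) (x (j + 1)) := by
      rw [tsum_eq_single j (fun k hk => by simp [if_neg hk])]
      simp
    have hb : ‖x j‖ ^ 2 + ‖x (j + 1)‖ ^ 2 ≤ 1 := by
      have h := Summable.sum_le_tsum ({j, j + 1} : Finset ℕ) (fun i _ => sq_nonneg ‖x i‖) hs
      rwa [hx1, Finset.sum_pair hne] at h
    simp only [hz, norm_mul, RCLike.norm_conj]
    nlinarith [sq_nonneg (‖x j‖ - ‖x (j + 1)‖), norm_nonneg t, norm_nonneg (x j),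
      norm_nonneg (x (j + 1)),
      mul_nonneg (norm_nonneg (x j)) (norm_nonneg (x (j + 1)))]
  · set c : ℂ := (((Real.sqrt 2)⁻¹ : ℝ) : ℂ) with hc_def
    set x : ℕ → ℂ := fun k => if k = j ∨ k = j + 1 then c else 0 with hx_def
    have hxj : x j = c := if_pos (Or.inl rfl)
    have hxj1 : x (j + 1) = c := if_pos (Or.inr rfl)
    have hcsq : ‖c‖ ^ 2 = 1 / 2 := by
      rw [hc_def, Complex.norm_real, Real.norm_eq_abs, sq_abs, inv_pow,
        Real.sq_sqrt (by norm_num : (0:ℝ) ≤ 2)]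
      norm_num
    have hx1 : (∑' k, ‖x k‖ ^ 2) = 1 := by
      rw [tsum_eq_sum (s := ({j, j + 1} : Finset ℕ)) (fun k hk => by
        have h1 : k ≠ j := fun h => hk (by simp [h])
        have h2 : k ≠ j + 1 := fun h => hk (by simp [h])
        simp [hx_def, h1, h2])]
      rw [Finset.sum_pair hne, hxj, hxj1, hcsq]
      norm_num
    have hz : (∑' k, (fun k => if k = j then t else 0) k * x k * (starRingEnd ℂ) (x (k + 1)))
        = t * c * (starRingEnd ℂ) c := by
      rw [tsum_eq_single j (fun k hk => by simp [if_neg hk])]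
      simp [hxj, hxj1]
    have hznorm : ‖t * c * (starRingEnd ℂ) c‖ = ‖t‖ / 2 := by
      rw [norm_mul, norm_mul, RCLike.norm_conj]
      have : ‖c‖ * ‖c‖ = 1 / 2 := by rw [← sq]; exact hcsq
      rw [mul_assoc, this]
      ring
    exact le_csSup (bddAbove_numRange hδ)
      ⟨t * c * (starRingEnd ℂ) c, ⟨x, hx1, hz.symm⟩, hznorm⟩

lemma fwd_single (d : ℕ → ℂ) (j : ℕ) :
    fwdShiftSeq d (fun k => if k = j then (1:ℂ) else 0) =
      fun k => if k = j + 1 then d j else 0 := by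
  funext k
  cases k with
  | zero => simp [fwdShiftSeq]
  | succ k =>
    by_cases h : k = j
    · simp [fwdShiftSeq, h]
    · simp [fwdShiftSeq, h, fun hh : k + 1 = j + 1 => h (Nat.succ_injective hh)]

lemma bwd_single (d : ℕ → ℂ) (j : ℕ) :
    (fun k => d k * (if k + 1 = j + 1 then (1:ℂ) else 0)) =
      fun k => if k = j then d j else 0 := by
  funext k
  by_cases h : k = j
  · simp [h]
  · simp [h, fun hh : k + 1 = j + 1 => h (Nat.succ_injective hh)]

lemma single_bdd (j : ℕ) (t : ℂ) : IsBddSeq (fun k => if k = j then t else 0) := by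
  refine ⟨‖t‖, fun k => ?_⟩
  by_cases h : k = j <;> simp [h]

theorem aux_stmt14 (d : ℕ → ℂ) (hd : IsBddSeq d) :
    IsLeast {c : ℝ | 0 ≤ c ∧ ∀ a : ℕ → ℂ, IsBddSeq a →
      numRad (fwdShiftSeq d a) ≤ c * numRad a} (supNorm d) ∧
    IsLeast {c : ℝ | 0 ≤ c ∧ ∀ a : ℕ → ℂ, IsBddSeq a →
      numRad (fun k => d k * a (k + 1)) ≤ c * numRad a} (supNorm d) := by
  obtain ⟨Cd, hCd⟩ := hd
  have hbd : BddAbove (Set.range fun k => ‖d k‖) := ⟨Cd, by rintro r ⟨k, rfl⟩; exact hCd k⟩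
  constructor
  · constructor
    · exact ⟨supNorm_nonneg ⟨Cd, hCd⟩, fun a ha => numRad_fwd_le ⟨Cd, hCd⟩ ha⟩
    · rintro c ⟨hc0, hc⟩
      apply ciSup_le
      intro j
      have h := hc (fun k => if k = j then (1:ℂ) else 0) (single_bdd j 1)
      rw [fwd_single, numRad_single, numRad_single] at h
      simp only [norm_one] at h
      linarith
  · constructor
    · exact ⟨supNorm_nonneg ⟨Cd, hCd⟩, fun a ha => numRad_bwd_le ⟨Cd, hCd⟩ ha⟩
    · rintro c ⟨hc0, hc⟩
      apply ciSup_le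
      intro j
      have h := hc (fun k => if k = j + 1 then (1:ℂ) else 0) (single_bdd (j + 1) 1)
      rw [show (fun k => d k * if k + 1 = j + 1 then (1:ℂ) else 0) =
        fun k => if k = j then d j else 0 from bwd_single d j] at h
      rw [numRad_single, numRad_single] at h
      simp only [norm_one] at h
      linarith

theorem stmt14 (d : ℕ → ℂ) (hd : IsBddSeq d) :
    IsLeast {c : ℝ | 0 ≤ c ∧ ∀ a : ℕ → ℂ, IsBddSeq a →
      numRad (fwdShiftSeq d a) ≤ c * numRad a} (supNorm d) ∧
    IsLeast {c : ℝ | 0 ≤ c ∧ ∀ a : ℕ → ℂ, IsBddSeq a →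
      numRad (fun k => d k * a (k + 1)) ≤ c * numRad a} (supNorm d) := aux_stmt14 d hd
end

section
/- The set D₁ of sequences a on the unit sphere of ℓ^∞ (i.e. ‖a‖_∞ = 1) for which there exist C > 0 and λ ∈ (0,1) with ∏_{k=1}^n |a_{k+j-1}| ≤ C λ^n for all n, j ∈ ℕ, is dense in the unit sphere {a ∈ ℓ^∞ : ‖a‖_∞ = 1} with respect to the uniform norm. -/
open Filter Finset Topology

theorem stmt18 (a : ℕ → ℂ) (hnorm : supNorm a = 1) (ε : ℝ) (hε : 0 < ε) :
    ∃ b : ℕ → ℂ, supNorm b = 1 ∧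
      (∃ C lam : ℝ, 0 < C ∧ 0 < lam ∧ lam < 1 ∧
        ∀ n j : ℕ, 1 ≤ n → ∏ k ∈ Finset.range n, ‖b (k + j)‖ ≤ C * lam ^ n) ∧
      supNorm (fun k => a k - b k) < ε := by
  set η : ℝ := min ε 1 / 2 with hη_def
  have hη0 : 0 < η := by
    have : 0 < min ε 1 := lt_min hε one_pos
    positivity
  have hηhalf : η ≤ 1/2 := by
    have : min ε 1 ≤ 1 := min_le_right _ _
    rw [hη_def]; linarith
  have hηε : η < ε := by
    have : min ε 1 ≤ ε := min_le_left _ _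
    rw [hη_def]; linarith
  -- a is bounded by 1
  have hbdd : BddAbove (Set.range fun k => ‖a k‖) := by
    by_contra h
    rw [supNorm, Real.iSup_of_not_bddAbove h] at hnorm
    norm_num at hnorm
  have ha1 : ∀ k, ‖a k‖ ≤ 1 := fun k => hnorm ▸ le_ciSup hbdd k
  obtain ⟨k0, hk0⟩ : ∃ k, 1 - η < ‖a k‖ := by
    have h1 : (1:ℝ) - η < ⨆ k, ‖a k‖ := by
      rw [← supNorm, hnorm]; linarith
    exact exists_lt_of_lt_ciSup h1
  have hk0pos : 0 < ‖a k0‖ := by linarith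
  set b : ℕ → ℂ := fun k => if k = k0 then a k0 * ((‖a k0‖ : ℂ))⁻¹
    else if k % 2 = k0 % 2 then a k else ((1 - η : ℝ) : ℂ) * a k with hb_def
  have hb3 : ‖b k0‖ = 1 := by
    simp only [hb_def, if_pos rfl]
    rw [norm_mul, norm_inv, Complex.norm_real, Real.norm_eq_abs, abs_of_pos hk0pos,
      mul_inv_cancel₀ hk0pos.ne']
  have hb1 : ∀ k, ‖b k‖ ≤ 1 := by
    intro k
    by_cases h1 : k = k0
    · subst h1; rw [hb3]
    · by_cases h2 : k % 2 = k0 % 2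
      · simp only [hb_def, if_neg h1, if_pos h2]; exact ha1 k
      · simp only [hb_def, if_neg h1, if_neg h2, norm_mul, Complex.norm_real,
          Real.norm_eq_abs]
        have h3 : |1 - η| = 1 - η := abs_of_pos (by linarith)
        nlinarith [ha1 k, norm_nonneg (a k)]
  have hb2 : ∀ k, k % 2 ≠ k0 % 2 → ‖b k‖ ≤ 1 - η := by
    intro k hk
    have h1 : k ≠ k0 := fun h => hk (by rw [h])
    simp only [hb_def, if_neg h1, if_neg hk, norm_mul, Complex.norm_real,
      Real.norm_eq_abs]
    have h3 : |1 - η| = 1 - η := abs_of_pos (by linarith)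
    nlinarith [ha1 k, norm_nonneg (a k)]
  have hb4 : ∀ k, ‖a k - b k‖ ≤ η := by
    intro k
    by_cases h1 : k = k0
    · subst h1
      simp only [hb_def, if_pos rfl]
      have : a k - a k * ((‖a k‖ : ℂ))⁻¹ = a k * ((1 : ℂ) - ((‖a k‖ : ℂ))⁻¹) := by ring
      rw [this, norm_mul]
      have h2 : ‖(1 : ℂ) - ((‖a k‖ : ℂ))⁻¹‖ = ‖a k‖⁻¹ - 1 := by
        rw [show (1 : ℂ) - ((‖a k‖ : ℂ))⁻¹ = (((1 : ℝ) - (‖a k‖)⁻¹ : ℝ) : ℂ) by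
          push_cast; ring]
        rw [Complex.norm_real, Real.norm_eq_abs, abs_of_nonpos]
        · ring
        · have : 1 ≤ (‖a k‖)⁻¹ := (one_le_inv₀ hk0pos).mpr (ha1 k)
          linarith
      rw [h2]
      have h3 : ‖a k‖ * ((‖a k‖)⁻¹ - 1) = 1 - ‖a k‖ := by
        rw [mul_sub, mul_inv_cancel₀ hk0pos.ne', mul_one]
      rw [h3]; linarith
    · by_cases h2 : k % 2 = k0 % 2
      · simp only [hb_def, if_neg h1, if_pos h2, sub_self, norm_zero]; linarith
      · simp only [hb_def, if_neg h1, if_neg h2]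
        have : a k - ((1 - η : ℝ) : ℂ) * a k = ((η : ℝ) : ℂ) * a k := by
          push_cast; ring
        rw [this, norm_mul, Complex.norm_real, Real.norm_eq_abs, abs_of_pos hη0]
        nlinarith [ha1 k, norm_nonneg (a k)]
  set lam : ℝ := Real.sqrt (1 - η) with hlam_def
  have h1η : 0 < 1 - η := by linarith
  have hlam0 : 0 < lam := Real.sqrt_pos.mpr h1η
  have hlamsq : lam ^ 2 = 1 - η := Real.sq_sqrt h1η.le
  have hlam1 : lam < 1 := by
    nlinarith [hlamsq, hlam0]
  have pair : ∀ j, ‖b j‖ * ‖b (j+1)‖ ≤ lam ^ 2 := by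
    intro j
    rw [hlamsq]
    by_cases h : j % 2 = k0 % 2
    · have h2 : (j+1) % 2 ≠ k0 % 2 := by omega
      nlinarith [hb1 j, hb2 (j+1) h2, norm_nonneg (b j), norm_nonneg (b (j+1))]
    · nlinarith [hb2 j h, hb1 (j+1), norm_nonneg (b j), norm_nonneg (b (j+1))]
  have key : ∀ n j : ℕ, ∏ k ∈ Finset.range n, ‖b (k + j)‖ ≤ lam⁻¹ * lam ^ n := by
    intro n
    induction n using Nat.strong_induction_on with
    | _ n ih =>
      match n with
      | 0 =>
        intro j
        simp only [Finset.range_zero, Finset.prod_empty, pow_zero, mul_one]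
        exact (one_le_inv₀ hlam0).mpr hlam1.le
      | 1 =>
        intro j
        simp only [Finset.prod_range_one, zero_add, pow_one, inv_mul_cancel₀ hlam0.ne']
        exact hb1 j
      | (m+2) =>
        intro j
        have h1 : ∏ k ∈ Finset.range (m+2), ‖b (k + j)‖
            = (∏ k ∈ Finset.range m, ‖b (k + (j+2))‖) * (‖b j‖ * ‖b (j+1)‖) := by
          rw [Finset.prod_range_succ', Finset.prod_range_succ']
          have e1 : ∀ k : ℕ, k + 1 + 1 + j = k + (j + 2) := fun k => by omega
          simp only [e1, zero_add, show 1 + j = j + 1 from Nat.add_comm 1 j]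
          ring
        rw [h1]
        have h2 := ih m (by omega) (j+2)
        have h3 := pair j
        have h4 : (0:ℝ) ≤ ∏ k ∈ Finset.range m, ‖b (k + (j+2))‖ :=
          Finset.prod_nonneg fun k _ => norm_nonneg _
        calc (∏ k ∈ Finset.range m, ‖b (k + (j+2))‖) * (‖b j‖ * ‖b (j+1)‖)
            ≤ (lam⁻¹ * lam ^ m) * lam ^ 2 := by
              apply mul_le_mul h2 h3 (mul_nonneg (norm_nonneg _) (norm_nonneg _))
              positivity
          _ = lam⁻¹ * lam ^ (m+2) := by ring
  refine ⟨b, ?_, ⟨lam⁻¹, lam, by positivity, hlam0, hlam1, fun n j _ => key n j⟩, ?_⟩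
  · apply le_antisymm
    · exact ciSup_le hb1
    · have hbb : BddAbove (Set.range fun k => ‖b k‖) :=
        ⟨1, Set.forall_mem_range.mpr hb1⟩
      calc (1:ℝ) = ‖b k0‖ := hb3.symm
        _ ≤ ⨆ k, ‖b k‖ := le_ciSup hbb k0
  · have : supNorm (fun k => a k - b k) ≤ η := ciSup_le hb4
    linarith
end
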